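/- arXiv:1903.05733 — 2 statements merged into one kernel-verified Lean document; each statement's English description precedes it below -/
import Mathlib

section
/- Let H be a real Hilbert space and φ : H → (-∞,+∞] proper with φ_ω convex for some ω ≥ 0, and assume (h + ωu, u)_H ≥ 0 for all (u,h) ∈ ∂φ. Let T > 0 and G : L²(0,T;H) → L²(0,T;H) be continuous with sublinear growth constants L ≥ 0 and b ∈ L²(0,T). Then every strong solution u ∈ H¹_loc((0,T];H) ∩ C([0,T];H) of u̇ + ∂φ(u) ∋ Gu with u(0) = u₀ satisfies, for all t ∈ [0,T], ‖u(t)‖_H ≤ (‖u₀‖²_H + ‖b‖²_{L²(0,T)})^{1/2} · e^{(2L+1+2ω)t/2}. -/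
open MeasureTheory Filter Set
open scoped Topology ENNReal

noncomputable section

variable {H : Type*} [NormedAddCommGroup H] [InnerProductSpace ℝ H] [CompleteSpace H]

/-- Convexity for `EReal`-valued functions on a real vector space. -/
def ERealConvexOn {E : Type*} [AddCommGroup E] [Module ℝ E] (φ : E → EReal) : Prop :=
  ∀ u v : E, ∀ a b : ℝ, 0 ≤ a → 0 ≤ b → a + b = 1 →
    φ (a • u + b • v) ≤ (a : EReal) * φ u + (b : EReal) * φ v

/-- The shifted function `φ_ω(u) = φ(u) + (ω/2)‖u‖²`. -/
def eShift (φ : H → EReal) (ω : ℝ) : H → EReal :=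
  fun u => φ u + ((ω / 2 * ‖u‖ ^ 2 : ℝ) : EReal)

/-- The subdifferential of `φ`, as a subset (graph) of `H × H`:
`(u,h) ∈ ∂φ` iff `liminf_{t↓0} (φ(u+tv) − φ(u))/t ≥ ⟪h,v⟫` for all `v ∈ D(φ)`. -/
def subdiff (φ : H → EReal) : Set (H × H) :=
  {p | ∀ v : H, φ v ≠ ⊤ →
    ((inner ℝ p.2 v : ℝ) : EReal) ≤
      liminf (fun t : ℝ => ((t⁻¹ : ℝ) : EReal) * (φ (p.1 + t • v) - φ p.1)) (𝓝[>] (0 : ℝ))}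

/-- `u ∈ H¹(a,b;H)` with a.e. derivative `u'`: `u' ∈ L²(a,b;H)` and `u` is absolutely
continuous on `[a,b]`, being the indefinite integral of `u'`. -/
def IsH1On (a b : ℝ) (u u' : ℝ → H) : Prop :=
  MemLp u' 2 (volume.restrict (Ioc a b)) ∧
  ∀ t ∈ Icc a b, u t = u a + ∫ s in a..t, u' s

/-- A strong solution of `u̇ + ∂φ(u) ∋ f`, `u(0) = u₀` on `[0,T]`:
`u ∈ H¹_loc((0,T];H) ∩ C([0,T];H)`, `u(0) = u₀`, and for a.e. `t ∈ (0,T)`,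
`u(t) ∈ D(∂φ)` and `f(t) − u̇(t) ∈ ∂φ(u(t))`. -/
def IsStrongSolution (φ : H → EReal) (T : ℝ) (f : ℝ → H) (u₀ : H) (u u' : ℝ → H) : Prop :=
  (∀ δ ∈ Ioo 0 T, IsH1On δ T u u') ∧ ContinuousOn u (Icc 0 T) ∧ u 0 = u₀ ∧
  (∀ᵐ t : ℝ, t ∈ Ioo 0 T → (u t, f t - u' t) ∈ subdiff φ)

/-- Sublinear growth of `G : L²(0,T;H) → L²(0,T;H)` with constants `L ≥ 0` and
`0 ≤ b ∈ L²(0,T)`: `‖Gv(t)‖ ≤ L‖v(t)‖ + b(t)` a.e. on `(0,T)` for every `v`. -/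
def HasSublinearGrowth (T : ℝ)
    (G : Lp H 2 (volume.restrict (Ioc (0 : ℝ) T)) → Lp H 2 (volume.restrict (Ioc (0 : ℝ) T)))
    (L : ℝ) (b : ℝ → ℝ) : Prop :=
  0 ≤ L ∧ MemLp b 2 (volume.restrict (Ioc (0 : ℝ) T)) ∧
  (∀ᵐ t ∂(volume.restrict (Ioc (0 : ℝ) T)), 0 ≤ b t) ∧
  ∀ v, ∀ᵐ t ∂(volume.restrict (Ioc (0 : ℝ) T)), ‖(G v : ℝ → H) t‖ ≤ L * ‖(v : ℝ → H) t‖ + b t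

lemma aux_sq_norm_setIntegral (g : ℝ → H) (a t : ℝ)
    (hg : IntegrableOn g (Ioc a t) volume) :
    ‖∫ x in Ioc a t, g x‖ ^ 2
      = 2 * ∫ x in Ioc a t, (inner ℝ (g x) (∫ y in Ioc a x, g y) : ℝ) := by
  set μ := volume.restrict (Ioc a t) with hμ
  have hgμ : Integrable g μ := hg
  set k : ℝ × ℝ → ℝ := fun p => (inner ℝ (g p.1) (g p.2) : ℝ) with hk
  have hk_meas : AEStronglyMeasurable k (μ.prod μ) :=
    (hgμ.aestronglyMeasurable.comp_fst).inner (hgμ.aestronglyMeasurable.comp_snd)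
  have hk_int : Integrable k (μ.prod μ) := by
    refine (hgμ.norm.mul_prod hgμ.norm).mono' hk_meas ?_
    exact Eventually.of_forall fun p => by
      simpa [k] using abs_real_inner_le_norm (g p.1) (g p.2)
  have step1 : ∫ p, k p ∂(μ.prod μ) = ‖∫ x, g x ∂μ‖ ^ 2 := by
    rw [MeasureTheory.integral_prod _ hk_int]
    have h1 : ∀ x : ℝ, ∫ y, (inner ℝ (g x) (g y) : ℝ) ∂μ = (inner ℝ (g x) (∫ y, g y ∂μ) : ℝ) :=
      fun x => integral_inner hgμ (g x)
    simp only [k, h1]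
    have h2 : ∀ x : ℝ, (inner ℝ (g x) (∫ y, g y ∂μ) : ℝ) = (inner ℝ (∫ y, g y ∂μ) (g x) : ℝ) :=
      fun x => real_inner_comm _ _
    simp only [h2, integral_inner hgμ, real_inner_self_eq_norm_sq]
  set s : Set (ℝ × ℝ) := {p | p.2 ≤ p.1} with hsdef
  have hs : MeasurableSet s := measurableSet_le measurable_snd measurable_fst
  have hdiag : (μ.prod μ) {p : ℝ × ℝ | p.1 = p.2} = 0 := by
    have hms : MeasurableSet {p : ℝ × ℝ | p.1 = p.2} :=
      measurableSet_eq_fun measurable_fst measurable_snd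
    rw [Measure.prod_apply hms]
    have h0 : ∀ x : ℝ, μ (Prod.mk x ⁻¹' {p : ℝ × ℝ | p.1 = p.2}) = 0 := by
      intro x
      have : Prod.mk x ⁻¹' {p : ℝ × ℝ | p.1 = p.2} = {x} := by
        ext y; simp [eq_comm]
      rw [this]
      exact measure_singleton x
    simp [h0]
  have step2 : ∫ p in sᶜ, k p ∂(μ.prod μ) = ∫ p in s, k p ∂(μ.prod μ) := by
    have hpre : Prod.swap ⁻¹' sᶜ = {p : ℝ × ℝ | p.2 < p.1} := by
      ext p
      simp [s, not_le]
    have hmap := (MeasurableEquiv.prodComm (α := ℝ) (β := ℝ)).measurableEmbedding.setIntegral_map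
      (μ := μ.prod μ) k sᶜ
    have hkswap : ∀ p : ℝ × ℝ, k (MeasurableEquiv.prodComm p) = k p := by
      intro p
      simp [k, MeasurableEquiv.prodComm, real_inner_comm]
    calc ∫ p in sᶜ, k p ∂(μ.prod μ)
        = ∫ p in sᶜ, k p ∂(Measure.map Prod.swap (μ.prod μ)) := by
          rw [Measure.prod_swap]
      _ = ∫ p in Prod.swap ⁻¹' sᶜ, k p ∂(μ.prod μ) := by
          rw [show (Measure.map Prod.swap (μ.prod μ)) =
              Measure.map (MeasurableEquiv.prodComm (α := ℝ) (β := ℝ)) (μ.prod μ) from rfl]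
          rw [hmap]
          exact setIntegral_congr_fun ((measurableSet_le measurable_snd measurable_fst).compl.preimage measurable_swap)
            fun p _ => hkswap p
      _ = ∫ p in {p : ℝ × ℝ | p.2 < p.1}, k p ∂(μ.prod μ) := by rw [hpre]
      _ = ∫ p in s, k p ∂(μ.prod μ) := by
          refine setIntegral_congr_set ?_
          have h1 : (μ.prod μ) ({p : ℝ × ℝ | p.2 < p.1} \ s) = 0 := by
            refine measure_mono_null ?_ hdiag
            rintro p ⟨hp1, hp2⟩
            simp only [mem_setOf_eq] at hp1
            have hp2' : p.1 < p.2 := by simpa [s, not_le] using hp2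
            exact absurd hp1 (lt_asymm hp2')
          have h2 : (μ.prod μ) (s \ {p : ℝ × ℝ | p.2 < p.1}) = 0 := by
            refine measure_mono_null ?_ hdiag
            rintro p ⟨hp1, hp2⟩
            have hp1' : p.2 ≤ p.1 := hp1
            have hp2' : p.1 ≤ p.2 := not_lt.1 (by simpa using hp2)
            exact le_antisymm hp2' hp1'
          rw [MeasureTheory.ae_eq_set]
          exact ⟨h1, h2⟩
  have step3 : ∫ p in s, k p ∂(μ.prod μ)
      = ∫ x in Ioc a t, (inner ℝ (g x) (∫ y in Ioc a x, g y) : ℝ) := by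
    rw [← MeasureTheory.integral_indicator hs, MeasureTheory.integral_prod _ (hk_int.indicator hs)]
    refine integral_congr_ae ?_
    filter_upwards [ae_restrict_mem measurableSet_Ioc] with x hx
    have h1 : (fun y => s.indicator k (x, y)) = (Iic x).indicator fun y => (inner ℝ (g x) (g y) : ℝ) := by
      funext y
      by_cases h : y ≤ x
      · simp [Set.indicator, s, k, h]
      · simp [Set.indicator, s, k, h]
    rw [h1, MeasureTheory.integral_indicator measurableSet_Iic]
    have h2 : μ.restrict (Iic x) = volume.restrict (Ioc a x) := by
      rw [hμ, Measure.restrict_restrict measurableSet_Iic]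
      congr 1
      ext y
      constructor
      · rintro ⟨h1', h2', h3'⟩; exact ⟨h2', h1'⟩
      · rintro ⟨h1', h2'⟩; exact ⟨h2', h1', h2'.trans hx.2⟩
    rw [h2]
    exact integral_inner (hg.mono_set (Ioc_subset_Ioc_right hx.2)) (g x)
  have split : ∫ p, k p ∂(μ.prod μ)
      = (∫ p in s, k p ∂(μ.prod μ)) + ∫ p in sᶜ, k p ∂(μ.prod μ) :=
    (integral_add_compl hs hk_int).symm
  rw [← step1, split, step2, step3]
  ring

lemma aux_energy (u u' : ℝ → H) (a T : ℝ)
    (hu' : IntegrableOn u' (Ioc a T) volume)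
    (hint : IntegrableOn (fun x => (inner ℝ (u' x) (u x) : ℝ)) (Ioc a T) volume)
    (hintc : IntegrableOn (fun x => (inner ℝ (u' x) (u a) : ℝ)) (Ioc a T) volume)
    (hrepr : ∀ t ∈ Icc a T, u t = u a + ∫ s in a..t, u' s) :
    ∀ t ∈ Icc a T,
      ‖u t‖ ^ 2 = ‖u a‖ ^ 2 + 2 * ∫ x in Ioc a t, (inner ℝ (u' x) (u x) : ℝ) := by
  intro t ht
  have hat : a ≤ t := ht.1
  have hsub : Ioc a t ⊆ Ioc a T := Ioc_subset_Ioc_right ht.2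
  have hgt : IntegrableOn u' (Ioc a t) volume := hu'.mono_set hsub
  have hintt : IntegrableOn (fun x => (inner ℝ (u' x) (u x) : ℝ)) (Ioc a t) volume :=
    hint.mono_set hsub
  have hintct : IntegrableOn (fun x => (inner ℝ (u' x) (u a) : ℝ)) (Ioc a t) volume :=
    hintc.mono_set hsub
  have hut : u t = u a + ∫ x in Ioc a t, u' x := by
    rw [hrepr t ht, intervalIntegral.integral_of_le hat]
  have hnorm : ‖u t‖ ^ 2 = ‖u a‖ ^ 2
      + 2 * (inner ℝ (u a) (∫ x in Ioc a t, u' x) : ℝ) + ‖∫ x in Ioc a t, u' x‖ ^ 2 := by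
    rw [hut]; exact norm_add_sq_real _ _
  have hcross : (inner ℝ (u a) (∫ x in Ioc a t, u' x) : ℝ)
      = ∫ x in Ioc a t, (inner ℝ (u' x) (u a) : ℝ) := by
    rw [← integral_inner hgt (u a)]
    exact integral_congr_ae (Eventually.of_forall fun x => real_inner_comm _ _)
  have hsq : ‖∫ x in Ioc a t, u' x‖ ^ 2
      = 2 * ∫ x in Ioc a t, ((inner ℝ (u' x) (u x) : ℝ) - (inner ℝ (u' x) (u a) : ℝ)) := by
    rw [aux_sq_norm_setIntegral u' a t hgt]
    congr 1
    refine setIntegral_congr_fun measurableSet_Ioc ?_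
    intro x hx
    have hx' : x ∈ Icc a T := ⟨hx.1.le, hx.2.trans ht.2⟩
    have hux : u x = u a + ∫ y in Ioc a x, u' y := by
      rw [hrepr x hx', intervalIntegral.integral_of_le hx.1.le]
    have : (∫ y in Ioc a x, u' y) = u x - u a := by rw [hux]; abel
    simp only []
    rw [this, inner_sub_right]
  have hsplit : ∫ x in Ioc a t, ((inner ℝ (u' x) (u x) : ℝ) - (inner ℝ (u' x) (u a) : ℝ))
      = (∫ x in Ioc a t, (inner ℝ (u' x) (u x) : ℝ))
        - ∫ x in Ioc a t, (inner ℝ (u' x) (u a) : ℝ) :=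
    integral_sub hintt hintct
  rw [hnorm, hcross, hsq, hsplit]
  ring

lemma aux_gronwall_integral (y : ℝ → ℝ) (hy : Continuous y) (hy0 : ∀ x, 0 ≤ y x)
    (a T c K : ℝ) (hc : 0 ≤ c) (hK : 0 ≤ K)
    (hineq : ∀ x ∈ Icc a T, y x ≤ c + K * ∫ s in a..x, y s) :
    ∀ x ∈ Icc a T, y x ≤ c * Real.exp (K * (x - a)) := by
  set F : ℝ → ℝ := fun x => c + K * ∫ s in a..x, y s with hF
  have hFd : ∀ x : ℝ, HasDerivAt F (K * y x) x := fun x =>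
    ((hy.integral_hasStrictDerivAt a x).hasDerivAt.const_mul K).const_add c
  have hFc : ContinuousOn F (Icc a T) := fun x _ =>
    (hFd x).continuousAt.continuousWithinAt
  have hFa : ‖F a‖ ≤ c := by
    simp only [hF, intervalIntegral.integral_same, mul_zero, add_zero]
    rw [Real.norm_eq_abs, abs_of_nonneg hc]
  have hbound : ∀ x ∈ Ico a T, ‖K * y x‖ ≤ K * ‖F x‖ + 0 := by
    intro x hx
    rw [Real.norm_eq_abs, abs_of_nonneg (mul_nonneg hK (hy0 x)), add_zero]
    have h1 : y x ≤ F x := hineq x ⟨hx.1, hx.2.le⟩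
    have h2 : F x ≤ ‖F x‖ := le_abs_self _
    exact mul_le_mul_of_nonneg_left (h1.trans h2) hK
  have := norm_le_gronwallBound_of_norm_deriv_right_le hFc
    (fun x hx => (hFd x).hasDerivWithinAt) hFa hbound
  intro x hx
  have h3 := this x hx
  rw [gronwallBound_ε0] at h3
  calc y x ≤ F x := hineq x hx
    _ ≤ ‖F x‖ := le_abs_self _
    _ ≤ c * Real.exp (K * (x - a)) := h3

set_option maxHeartbeats 1000000 in
/-- **A priori estimate for the perturbed problem.** If `φ` is proper, `φ_ω` is convex
for some `ω ≥ 0` with `(h + ωu, u) ≥ 0` for all `(u,h) ∈ ∂φ`, and `G` is continuous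
with sublinear growth constants `L` and `b`, then every strong solution of
`u̇ + ∂φ(u) ∋ Gu`, `u(0) = u₀`, satisfies for all `t ∈ [0,T]`
`‖u(t)‖ ≤ (‖u₀‖² + ‖b‖²_{L²(0,T)})^{1/2}·e^{(2L+1+2ω)t/2}`. -/
theorem norm_estimate_perturbed
    (φ : H → EReal) (hbot : ∀ u, φ u ≠ ⊥) (hproper : ∃ u, φ u ≠ ⊤)
    (ω : ℝ) (hω : 0 ≤ ω) (hconv : ERealConvexOn (eShift φ ω))
    (hmono : ∀ p ∈ subdiff φ, (0 : ℝ) ≤ inner ℝ (p.2 + ω • p.1) p.1)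
    (T : ℝ) (hT : 0 < T)
    (G : Lp H 2 (volume.restrict (Ioc (0 : ℝ) T)) → Lp H 2 (volume.restrict (Ioc (0 : ℝ) T)))
    (hGcont : Continuous G) (L : ℝ) (b : ℝ → ℝ) (hG : HasSublinearGrowth T G L b)
    (u₀ : H) (u u' : ℝ → H) (hu : MemLp u 2 (volume.restrict (Ioc (0 : ℝ) T)))
    (hsol : IsStrongSolution φ T (fun t => (G (hu.toLp u) : ℝ → H) t) u₀ u u') :
    ∀ t ∈ Icc (0 : ℝ) T,
      ‖u t‖ ≤ Real.sqrt (‖u₀‖ ^ 2 + ∫ s in Ioc (0 : ℝ) T, (b s) ^ 2) *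
        Real.exp ((2 * L + 1 + 2 * ω) / 2 * t) := by
  obtain ⟨hH1, hucont, hu0, hsub⟩ := hsol
  obtain ⟨hL, hbL2, hbnn, hgrowth⟩ := hG
  set f : ℝ → H := fun t => (G (hu.toLp u) : ℝ → H) t with hfdef
  set K := 2 * L + 1 + 2 * ω with hKdef
  have hK0 : 0 ≤ K := by unfold K; linarith
  set B := ∫ s in Ioc (0:ℝ) T, (b s)^2 with hBdef
  have hB0 : 0 ≤ B := integral_nonneg fun s => sq_nonneg _
  set C := ‖u₀‖^2 + B with hCdef
  have hC0 : 0 ≤ C := add_nonneg (sq_nonneg _) hB0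
  -- clamped continuous version of u
  set uc : ℝ → H := fun t => u (min (max t 0) T) with hucdef
  have hclamp_mem : ∀ t : ℝ, min (max t 0) T ∈ Icc 0 T := fun t =>
    ⟨le_min (le_max_right t 0) hT.le, min_le_right _ _⟩
  have hucc : Continuous uc :=
    hucont.comp_continuous ((continuous_id.max continuous_const).min continuous_const) hclamp_mem
  have huc_eq : ∀ t ∈ Icc (0:ℝ) T, uc t = u t := by
    intro t ht
    simp only [hucdef, max_eq_left ht.1, min_eq_left ht.2]
  set y : ℝ → ℝ := fun t => ‖uc t‖^2 with hydef
  have hyc : Continuous y := (hucc.norm).pow 2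
  have hy0 : ∀ t, 0 ≤ y t := fun t => sq_nonneg _
  have hb2 : IntegrableOn (fun s => b s ^ 2) (Ioc (0:ℝ) T) volume := hbL2.integrable_sq
  -- Step A : a.e. differential inequality
  have hgrow : ∀ᵐ s ∂(volume.restrict (Ioc (0:ℝ) T)), ‖f s‖ ≤ L * ‖u s‖ + b s := by
    filter_upwards [hgrowth (hu.toLp u), hu.coeFn_toLp] with s h1 h2
    simpa [hfdef, h2] using h1
  have hae : ∀ᵐ s ∂(volume.restrict (Ioc (0:ℝ) T)),
      2 * (inner ℝ (u' s) (u s) : ℝ) ≤ K * ‖u s‖^2 + (b s)^2 := by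
    have hioo : ∀ᵐ s ∂(volume.restrict (Ioc (0:ℝ) T)),
        s ∈ Ioo 0 T → (u s, f s - u' s) ∈ subdiff φ := ae_restrict_of_ae hsub
    have hne : ∀ᵐ s ∂(volume.restrict (Ioc (0:ℝ) T)), s ≠ T := by
      refine ae_restrict_of_ae ?_
      rw [ae_iff]
      have : {x : ℝ | ¬ x ≠ T} = {T} := by ext x; simp
      rw [this]
      simp
    filter_upwards [hioo, hne, hgrow, ae_restrict_mem measurableSet_Ioc] with s h1 h2 h3 h4
    have hsIoo : s ∈ Ioo 0 T := ⟨h4.1, lt_of_le_of_ne h4.2 h2⟩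
    have h5 := hmono _ (h1 hsIoo)
    simp only at h5
    rw [inner_add_left, inner_sub_left, real_inner_smul_left, real_inner_self_eq_norm_sq] at h5
    have h7 : (inner ℝ (f s) (u s) : ℝ) ≤ ‖f s‖ * ‖u s‖ := real_inner_le_norm _ _
    have h8 : ‖f s‖ * ‖u s‖ ≤ (L * ‖u s‖ + b s) * ‖u s‖ :=
      mul_le_mul_of_nonneg_right h3 (norm_nonneg _)
    have hsq : 2 * (b s * ‖u s‖) ≤ b s ^ 2 + ‖u s‖^2 := by nlinarith [sq_nonneg (b s - ‖u s‖)]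
    unfold K
    nlinarith
  -- key estimate for positive lower endpoint
  have key : ∀ δ ∈ Ioo (0:ℝ) T, ∀ x ∈ Icc δ T,
      ‖u x‖^2 ≤ (‖u δ‖^2 + B) * Real.exp (K * x) := by
    intro δ hδ
    obtain ⟨hu'2, hrepr⟩ := hH1 δ hδ
    haveI hfin : IsFiniteMeasure (volume.restrict (Ioc δ T)) :=
      ⟨by rw [Measure.restrict_apply_univ]; exact measure_Ioc_lt_top⟩
    have hu'1 : IntegrableOn u' (Ioc δ T) volume := hu'2.integrable one_le_two
    have hIocIcc : Ioc δ T ⊆ Icc 0 T := fun x hx => ⟨(hδ.1.trans hx.1).le, hx.2⟩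
    obtain ⟨M, hM⟩ := (isCompact_Icc (a := (0:ℝ)) (b := T)).exists_bound_of_continuousOn hucont
    have huaesm : AEStronglyMeasurable u (volume.restrict (Ioc δ T)) :=
      (hucont.mono hIocIcc).aestronglyMeasurable measurableSet_Ioc
    have hinner_int : IntegrableOn (fun x => (inner ℝ (u' x) (u x) : ℝ)) (Ioc δ T) volume := by
      refine Integrable.mono' (hu'1.norm.mul_const M) ((hu'2.aestronglyMeasurable).inner huaesm) ?_
      filter_upwards [ae_restrict_mem measurableSet_Ioc] with x hx
      calc ‖(inner ℝ (u' x) (u x) : ℝ)‖ ≤ ‖u' x‖ * ‖u x‖ := by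
            rw [Real.norm_eq_abs]; exact abs_real_inner_le_norm _ _
        _ ≤ ‖u' x‖ * M := mul_le_mul_of_nonneg_left (hM x (hIocIcc hx)) (norm_nonneg _)
    have hinnerc_int : IntegrableOn (fun x => (inner ℝ (u' x) (u δ) : ℝ)) (Ioc δ T) volume :=
      hu'1.inner_const (u δ)
    have hEnergy := aux_energy u u' δ T hu'1 hinner_int hinnerc_int hrepr
    have hcpos : 0 ≤ ‖u δ‖^2 + B := add_nonneg (sq_nonneg _) hB0
    have hcineq : ∀ x ∈ Icc δ T, y x ≤ (‖u δ‖^2 + B) + K * ∫ s in δ..x, y s := by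
      intro x hx
      have hxIcc : x ∈ Icc (0:ℝ) T := ⟨hδ.1.le.trans hx.1, hx.2⟩
      have hIocx : Ioc δ x ⊆ Ioc 0 T := fun s hs => ⟨hδ.1.trans hs.1, hs.2.trans hx.2⟩
      have haex : ∀ᵐ s ∂(volume.restrict (Ioc δ x)),
          2*(inner ℝ (u' s) (u s):ℝ) ≤ K * y s + b s^2 := by
        filter_upwards [ae_restrict_of_ae_restrict_of_subset hIocx hae,
          ae_restrict_mem measurableSet_Ioc] with s h1 h2
        have hyeq : y s = ‖u s‖^2 := by
          rw [hydef]; simp only []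
          rw [huc_eq s ⟨(hδ.1.trans h2.1).le, h2.2.trans hxIcc.2⟩]
        rw [hyeq]; exact h1
      have hint1 : IntegrableOn (fun s => 2*(inner ℝ (u' s) (u s):ℝ)) (Ioc δ x) volume :=
        (hinner_int.mono_set (Ioc_subset_Ioc_right hx.2)).const_mul 2
      have hKy_int : IntegrableOn (fun s => K * y s) (Ioc δ x) volume :=
        (continuous_const.mul hyc).integrableOn_Ioc
      have hb2x : IntegrableOn (fun s => b s^2) (Ioc δ x) volume := hb2.mono_set hIocx
      have hint2 : IntegrableOn (fun s => K * y s + b s^2) (Ioc δ x) volume := hKy_int.add hb2x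
      have hmono_int : ∫ s in Ioc δ x, 2*(inner ℝ (u' s) (u s):ℝ)
          ≤ ∫ s in Ioc δ x, (K * y s + b s^2) := integral_mono_ae hint1 hint2 haex
      have hadd : ∫ s in Ioc δ x, (K * y s + b s^2)
          = K * (∫ s in Ioc δ x, y s) + ∫ s in Ioc δ x, b s^2 := by
        rw [integral_add hKy_int hb2x, integral_const_mul]
      have hbmono : ∫ s in Ioc δ x, b s^2 ≤ B :=
        setIntegral_mono_set hb2 (Eventually.of_forall fun s => sq_nonneg _)
          (HasSubset.Subset.eventuallyLE hIocx)
      have hix : ∫ s in δ..x, y s = ∫ s in Ioc δ x, y s := intervalIntegral.integral_of_le hx.1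
      have h2const : ∫ s in Ioc δ x, 2*(inner ℝ (u' s) (u s):ℝ)
          = 2 * ∫ s in Ioc δ x, (inner ℝ (u' s) (u s):ℝ) := integral_const_mul 2 _
      have hyx : y x = ‖u x‖^2 := by
        rw [hydef]; simp only []; rw [huc_eq x hxIcc]
      rw [hyx, hEnergy x hx, hix]
      rw [← h2const]
      rw [hadd] at hmono_int
      linarith [hmono_int, hbmono]
    have hg := aux_gronwall_integral y hyc hy0 δ T _ K hcpos hK0 hcineq
    intro x hx
    have hxIcc : x ∈ Icc (0:ℝ) T := ⟨hδ.1.le.trans hx.1, hx.2⟩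
    have hyx : y x = ‖u x‖^2 := by
      rw [hydef]; simp only []; rw [huc_eq x hxIcc]
    calc ‖u x‖^2 = y x := hyx.symm
      _ ≤ (‖u δ‖^2+B) * Real.exp (K*(x-δ)) := hg x hx
      _ ≤ (‖u δ‖^2+B) * Real.exp (K*x) := by
          refine mul_le_mul_of_nonneg_left ?_ hcpos
          refine Real.exp_le_exp.2 ?_
          have hr : K*(x-δ) = K*x - K*δ := by ring
          have hd : 0 ≤ K * δ := mul_nonneg hK0 hδ.1.le
          linarith
  -- limit δ → 0
  have main : ∀ t ∈ Icc (0:ℝ) T, ‖u t‖^2 ≤ C * Real.exp (K * t) := by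
    intro t ht
    rcases eq_or_lt_of_le ht.1 with h0 | h0
    · subst h0
      rw [hu0, mul_zero, Real.exp_zero, mul_one]
      unfold C
      linarith
    · have hev : ∀ᶠ δ in 𝓝[>] (0:ℝ), ‖u t‖^2 ≤ (‖u δ‖^2 + B) * Real.exp (K * t) := by
        filter_upwards [Ioo_mem_nhdsGT_of_mem (show (0:ℝ) ∈ Ico 0 t from ⟨le_rfl, h0⟩)]
          with δ hδ'
        have hδIooT : δ ∈ Ioo 0 T := ⟨hδ'.1, hδ'.2.trans_le ht.2⟩
        exact key δ hδIooT t ⟨hδ'.2.le, ht.2⟩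
      have hIcc_mem : Icc (0:ℝ) T ∈ 𝓝[>] (0:ℝ) :=
        mem_of_superset (Ioc_mem_nhdsGT_of_mem ⟨le_rfl, hT⟩) Ioc_subset_Icc_self
      have h1 : Tendsto u (𝓝[>] (0:ℝ)) (𝓝 (u 0)) :=
        (hucont 0 (left_mem_Icc.2 hT.le)).mono_left (nhdsWithin_le_iff.2 hIcc_mem)
      have htend : Tendsto (fun δ => (‖u δ‖^2 + B) * Real.exp (K * t)) (𝓝[>] (0:ℝ))
          (𝓝 ((‖u 0‖^2 + B) * Real.exp (K*t))) :=
        (((h1.norm).pow 2).add_const B).mul_const _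
      have := ge_of_tendsto htend hev
      rw [hu0] at this
      exact this
  intro t ht
  have h := main t ht
  have hnorm : ‖u t‖ = Real.sqrt (‖u t‖^2) := (Real.sqrt_sq (norm_nonneg _)).symm
  have hCexp : C * Real.exp (K * t) = C * (Real.exp ((K/2) * t))^2 := by
    rw [sq, ← Real.exp_add]
    ring_nf
  calc ‖u t‖ = Real.sqrt (‖u t‖^2) := hnorm
    _ ≤ Real.sqrt (C * Real.exp (K*t)) := Real.sqrt_le_sqrt h
    _ = Real.sqrt C * Real.exp ((K/2)*t) := by
        rw [hCexp, Real.sqrt_mul hC0, Real.sqrt_sq (Real.exp_pos _).le]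
    _ = Real.sqrt (‖u₀‖^2 + B) * Real.exp ((2*L+1+2*ω)/2 * t) := by
        rw [hCdef, hKdef]

end
end

section
/- Let V be a real locally convex topological vector space, H a real Hilbert space, and j : V → H a linear weak-to-weak continuous operator that maps relatively weakly compact subsets of V into relatively norm-compact subsets of H. Let φ : V → (-∞,+∞] be proper and let ω ≥ 0 be such that φ_ω(û) := φ(û) + (ω/2)‖j(û)‖²_H is convex and every sublevel set {û ∈ V : φ_ω(û) ≤ c} is relatively weakly compact and weakly closed. Suppose φ^H : H → (-∞,+∞] is proper, lower semicontinuous, φ^H_ω(u) := φ^H(u) + (ω/2)‖u‖²_H is convex, and there exists d ∈ ℝ such that φ^H_ω(u) = d + inf{φ_ω(û) : û ∈ V, j(û) = u} for every u ∈ H. Then for every c ∈ ℝ the sublevel set {u ∈ H : φ^H_ω(u) ≤ c} is compact in H. -/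
open MeasureTheory Filter Set
open scoped Topology ENNReal

noncomputable section

variable {H : Type*} [NormedAddCommGroup H] [InnerProductSpace ℝ H] [CompleteSpace H]

/-- The weak topology `σ(E, E')` on a topological vector space `E`, i.e. the topology
induced by the continuous linear functionals on `E`. -/
def weakTopology (E : Type*) [AddCommGroup E] [Module ℝ E] [TopologicalSpace E] :
    TopologicalSpace E :=
  TopologicalSpace.induced (fun x (f : E →L[ℝ] ℝ) => f x) Pi.topologicalSpace

variable {V : Type*} [AddCommGroup V] [Module ℝ V] [TopologicalSpace V]
  [IsTopologicalAddGroup V] [ContinuousSMul ℝ V] [LocallyConvexSpace ℝ V]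

/-- The shifted function `φ_ω(uh) = φ(uh) + (ω/2)‖j(uh)‖²` in the `j`-framework. -/
def jShift (j : V →ₗ[ℝ] H) (φ : V → EReal) (ω : ℝ) : V → EReal :=
  fun uh => φ uh + ((ω / 2 * ‖j uh‖ ^ 2 : ℝ) : EReal)

/-- The `j`-subdifferential `∂_jφ ⊆ H × H`: `(u,f) ∈ ∂_jφ` iff there is `uh ∈ D(φ)` with
`j(uh) = u` and `liminf_{t↓0} (φ(uh+tvh) − φ(uh))/t ≥ (f, j(vh))` for every `vh ∈ V`. -/
def jSubdiff (j : V →ₗ[ℝ] H) (φ : V → EReal) : Set (H × H) :=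
  {p | ∃ uh : V, φ uh ≠ ⊤ ∧ j uh = p.1 ∧ ∀ vh : V,
    ((inner ℝ p.2 (j vh) : ℝ) : EReal) ≤
      liminf (fun t : ℝ => ((t⁻¹ : ℝ) : EReal) * (φ (uh + t • vh) - φ uh)) (𝓝[>] (0 : ℝ))}

/-- **Compactness of sublevel sets of `φ^H`.** Let `j : V → H` be linear, weak-to-weak
continuous, mapping relatively weakly compact sets into relatively norm-compact sets.
Let `φ` be proper with `φ_ω` convex (`ω ≥ 0`) and all its sublevel sets relatively
weakly compact and weakly closed, and let `φ^H` be proper, lower semicontinuous with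
`φ^H_ω` convex and `φ^H_ω(u) = d + inf{φ_ω(û) : j(û) = u}`. Then every sublevel set
`{u ∈ H : φ^H_ω(u) ≤ c}` is compact in `H`. -/
theorem sublevel_compact_of_j_elliptic
    (j : V →ₗ[ℝ] H)
    (hjw : @Continuous V H (weakTopology V) (weakTopology H) j)
    (hjc : ∀ s : Set V, @IsCompact V (weakTopology V) (@closure V (weakTopology V) s) →
      IsCompact (closure (⇑j '' s)))
    (φ : V → EReal) (hbot : ∀ uh, φ uh ≠ ⊥) (hproper : ∃ uh, φ uh ≠ ⊤)
    (ω : ℝ) (hω : 0 ≤ ω) (hconv : ERealConvexOn (jShift j φ ω))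
    (hlev : ∀ c : ℝ,
      @IsCompact V (weakTopology V)
        (@closure V (weakTopology V) {uh : V | jShift j φ ω uh ≤ (c : EReal)}) ∧
      @IsClosed V (weakTopology V) {uh : V | jShift j φ ω uh ≤ (c : EReal)})
    (φH : H → EReal) (hHbot : ∀ u, φH u ≠ ⊥) (hHproper : ∃ u, φH u ≠ ⊤)
    (hHlsc : LowerSemicontinuous φH) (hHconv : ERealConvexOn (eShift φH ω))
    (d : ℝ)
    (hrep : ∀ u : H, eShift φH ω u = (d : EReal) + sInf (jShift j φ ω '' {uh : V | j uh = u})) :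
    ∀ c : ℝ, IsCompact {u : H | eShift φH ω u ≤ (c : EReal)} := by
  intro c
  -- lower semicontinuity of the shifted function
  have hlsc : LowerSemicontinuous (eShift φH ω) := by
    have hg : Continuous fun u : H => ((ω / 2 * ‖u‖ ^ 2 : ℝ) : EReal) :=
      continuous_coe_real_ereal.comp (by continuity)
    exact hHlsc.add' hg.lowerSemicontinuous fun x =>
      EReal.continuousAt_add (Or.inr (EReal.coe_ne_bot _)) (Or.inr (EReal.coe_ne_top _))
  have hSclosed : IsClosed {u : H | eShift φH ω u ≤ (c : EReal)} :=
    hlsc.isClosed_preimage c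
  -- the sublevel set at level c - d + 1 in V
  set K : Set V := {uh : V | jShift j φ ω uh ≤ ((c - d + 1 : ℝ) : EReal)} with hK
  have hKcomp : IsCompact (closure (⇑j '' K)) := hjc K (hlev (c - d + 1)).1
  apply hKcomp.of_isClosed_subset hSclosed
  intro u hu
  have hu' : eShift φH ω u ≤ (c : EReal) := hu
  rw [hrep u] at hu'
  have hlt : sInf (jShift j φ ω '' {uh : V | j uh = u}) < ((c - d + 1 : ℝ) : EReal) := by
    by_contra h
    push_neg at h
    have : (d : EReal) + ((c - d + 1 : ℝ) : EReal) ≤ (d : EReal) +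
        sInf (jShift j φ ω '' {uh : V | j uh = u}) := add_le_add_right h _
    have h2 : ((c + 1 : ℝ) : EReal) ≤ (c : EReal) := by
      calc ((c + 1 : ℝ) : EReal) = (d : EReal) + ((c - d + 1 : ℝ) : EReal) := by
            rw [← EReal.coe_add]; congr 1; ring
        _ ≤ _ := this
        _ ≤ (c : EReal) := hu'
    rw [EReal.coe_le_coe_iff] at h2
    linarith
  obtain ⟨x, hx, hxlt⟩ := sInf_lt_iff.1 hlt
  obtain ⟨uh, hju, hxeq⟩ := hx
  have huhK : uh ∈ K := by
    simp only [hK, Set.mem_setOf_eq, hxeq]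
    exact hxlt.le
  have : u ∈ ⇑j '' K := ⟨uh, huhK, hju⟩
  exact subset_closure this

end
end
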